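/- Assume w_min ≤ w_max, where w_min = (T−R)/(R−S) and w_max = (P−S)/(T−P). If w < w_min then (D,D) is the unique pure-strategy Nash equilibrium of the subjective game; if w > w_max then (C,C) is the unique pure-strategy Nash equilibrium; and if w_min ≤ w ≤ w_max then both (C,C) and (D,D) are pure-strategy Nash equilibria. -/

import Mathlib

/-! The subjective game is symmetric, and at a symmetric profile a player's only deviation
compares one threshold with `w = b / a`: mutual cooperation is stable iff `w_min ≤ w`, mutual
defection iff `w ≤ w_max`, while an asymmetric profile is stable iff `w_max ≤ w ≤ w_min`, which
`w_min ≤ w_max` only allows on the boundary `w = w_min = w_max`, never in the strict phases. -/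

/-- Pure strategies in the Prisoner's Dilemma. -/
inductive Strategy : Type
  | C : Strategy
  | D : Strategy
deriving DecidableEq

open Strategy

/-- Objective payoff of the row player when she plays `s` against `t`:
`R` at (C,C), `P` at (D,D), `S` for the cooperator and `T` for the defector
at an asymmetric profile. -/
def payoff (T R P S : ℝ) : Strategy → Strategy → ℝ
  | C, C => R
  | C, D => S
  | D, C => T
  | D, D => P

/-- Subjective utility of a player who plays `s` against `t`:
`u'_i = a·u_i + b·u_j`. -/
def subj (T R P S a b : ℝ) (s t : Strategy) : ℝ :=
  a * payoff T R P S s t + b * payoff T R P S t s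

/-- `(s, t)` is a pure-strategy Nash equilibrium of the subjective game:
no player can strictly increase her subjective utility by a unilateral deviation. -/
def IsNash (T R P S a b : ℝ) (s t : Strategy) : Prop :=
  (∀ s' : Strategy, subj T R P S a b s' t ≤ subj T R P S a b s t) ∧
  (∀ t' : Strategy, subj T R P S a b t' s ≤ subj T R P S a b t s)

lemma isNash_comm {T R P S a b : ℝ} {s t : Strategy} :
    IsNash T R P S a b s t ↔ IsNash T R P S a b t s :=
  and_comm

lemma forall_strategy {p : Strategy → Prop} : (∀ s, p s) ↔ p C ∧ p D :=
  ⟨fun h => ⟨h C, h D⟩, fun ⟨hC, hD⟩ s => by cases s <;> assumption⟩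

section Thresholds

variable {T R P S a b : ℝ}

lemma isNash_C_C_iff (ha : 0 < a) (hSR : S < R) :
    IsNash T R P S a b C C ↔ (T - R) / (R - S) ≤ b / a := by
  rw [div_le_div_iff₀ (sub_pos.2 hSR) ha]
  simp only [IsNash, forall_strategy, subj, payoff, le_refl, true_and, and_self]
  constructor <;> intro h <;> linarith

lemma isNash_D_D_iff (ha : 0 < a) (hPT : P < T) :
    IsNash T R P S a b D D ↔ b / a ≤ (P - S) / (T - P) := by
  rw [div_le_div_iff₀ ha (sub_pos.2 hPT)]
  simp only [IsNash, forall_strategy, subj, payoff, le_refl, and_true, and_self]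
  constructor <;> intro h <;> linarith

lemma isNash_C_D_iff (ha : 0 < a) (hSR : S < R) (hPT : P < T) :
    IsNash T R P S a b C D ↔
      (P - S) / (T - P) ≤ b / a ∧ b / a ≤ (T - R) / (R - S) := by
  rw [div_le_div_iff₀ (sub_pos.2 hPT) ha, div_le_div_iff₀ ha (sub_pos.2 hSR)]
  simp only [IsNash, forall_strategy, subj, payoff, le_refl, true_and, and_true]
  constructor <;> rintro ⟨h₁, h₂⟩ <;> constructor <;> linarith

end Thresholds

theorem three_phases_general (T R P S a b : ℝ)
    (hTR : T > R) (hRP : R > P) (hPS : P > S)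
    (ha : a > 0)
    (hband : (T - R) / (R - S) ≤ (P - S) / (T - P)) :
    (b / a < (T - R) / (R - S) →
      ∀ s t : Strategy, IsNash T R P S a b s t ↔ (s = Strategy.D ∧ t = Strategy.D)) ∧
    (b / a > (P - S) / (T - P) →
      ∀ s t : Strategy, IsNash T R P S a b s t ↔ (s = Strategy.C ∧ t = Strategy.C)) ∧
    ((T - R) / (R - S) ≤ b / a ∧ b / a ≤ (P - S) / (T - P) →
      IsNash T R P S a b Strategy.C Strategy.C ∧
      IsNash T R P S a b Strategy.D Strategy.D) := by
  have hSR : S < R := by linarith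
  have hPT : P < T := by linarith
  have hCC : IsNash T R P S a b C C ↔ _ := isNash_C_C_iff ha hSR
  have hDD : IsNash T R P S a b D D ↔ _ := isNash_D_D_iff ha hPT
  have hCD : IsNash T R P S a b C D ↔ _ := isNash_C_D_iff ha hSR hPT
  have hDC : IsNash T R P S a b D C ↔ _ := isNash_comm.trans hCD
  refine ⟨fun hw s t => ?_, fun hw s t => ?_, fun ⟨hmin, hmax⟩ => ⟨hCC.2 hmin, hDD.2 hmax⟩⟩ <;>
    cases s <;> cases t <;> simp only [hCC, hDD, hCD, hDC, reduceCtorEq, and_self, and_false, false_and, iff_true,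
      iff_false, not_le, not_and] <;> intros <;> linarith

/-- assume `w_min ≤ w_max`.  If `w < w_min` then (D,D) is the unique
pure-strategy Nash equilibrium; if `w > w_max` then (C,C) is the unique one; and
if `w_min ≤ w ≤ w_max` then both (C,C) and (D,D) are Nash equilibria. -/
theorem three_phases (T R P S a b : ℝ)
    (hTR : T > R) (hRP : R > P) (hPS : P > S)
    (ha : a > 0) (hb : b ≥ 0)
    (hband : (T - R) / (R - S) ≤ (P - S) / (T - P)) :
    (b / a < (T - R) / (R - S) →
      ∀ s t : Strategy, IsNash T R P S a b s t ↔ (s = Strategy.D ∧ t = Strategy.D)) ∧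
    (b / a > (P - S) / (T - P) →
      ∀ s t : Strategy, IsNash T R P S a b s t ↔ (s = Strategy.C ∧ t = Strategy.C)) ∧
    ((T - R) / (R - S) ≤ b / a ∧ b / a ≤ (P - S) / (T - P) →
      IsNash T R P S a b Strategy.C Strategy.C ∧
      IsNash T R P S a b Strategy.D Strategy.D) :=
  three_phases_general T R P S a b hTR hRP hPS ha hband
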